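/- arXiv:1512.03868 — 8 statements merged into one kernel-verified Lean document; each statement's English description precedes it below -/
import Mathlib

section
/- Let A = (D, ∇, ⊢) be an algebraic information system. Then the associated domain |A|, ordered by inclusion, is an algebraic Scott domain: it is directed complete (with least element the deductive closure of ∅), bounded complete (every subset of |A| that has an upper bound in |A| has a least upper bound in |A|), and algebraic (for every x ∈ |A|, the set of compact elements of |A| below x is directed and its least upper bound is x). -/
/-- An algebraic information system: a set of tokens `D`, a false statement `nabla`,
and an entailment relation between finite subsets of `D`. -/
structure AlgInfoSys (D : Type*) where
  nabla : D
  entails : Set D → Set D → Prop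
  entails_finite : ∀ u v : Set D, entails u v → u.Finite ∧ v.Finite
  nondegen : ¬ entails ∅ {nabla}
  refl : ∀ u v : Set D, u.Finite → v ⊆ u → entails u v
  trans : ∀ (u w : Set D) (V : Set (Set D)), V.Finite →
    (∀ v ∈ V, entails u v) → entails (⋃₀ V) w → entails u w
  contra : ∀ u : Set D, u.Finite → entails {nabla} u

/-- A theory (element of the associated domain `|A|`): a consistent, deductively
closed set of tokens. -/
def AlgInfoSys.IsElement {D : Type*} (A : AlgInfoSys D) (x : Set D) : Prop :=
  A.nabla ∉ x ∧ ∀ u v : Set D, u ⊆ x → A.entails u v → v ⊆ x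

/-- The deductive closure of a set of tokens. -/
def AlgInfoSys.closure {D : Type*} (A : AlgInfoSys D) (x : Set D) : Set D :=
  {d | ∃ u : Set D, u ⊆ x ∧ A.entails u {d}}

/-- `x` is way below `y` in a preorder. -/
def wayBelow {α : Type*} [Preorder α] (x y : α) : Prop :=
  ∀ S : Set α, S.Nonempty → DirectedOn (· ≤ ·) S → ∀ b : α, IsLUB S b → y ≤ b → ∃ s ∈ S, x ≤ s

/-- A directed complete partial order: every directed subset (including `∅`) has a lub. -/
def IsDcpo (α : Type*) [Preorder α] : Prop :=
  ∀ S : Set α, DirectedOn (· ≤ ·) S → ∃ b, IsLUB S b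

/-- Bounded completeness: every subset with an upper bound has a least upper bound. -/
def BoundedComplete (α : Type*) [Preorder α] : Prop :=
  ∀ S : Set α, (∃ b, ∀ s ∈ S, s ≤ b) → ∃ m, IsLUB S m

/-- Algebraicity: for every element, the set of compact elements below it is
directed with least upper bound the element itself. -/
def IsAlgebraicDom (α : Type*) [Preorder α] : Prop :=
  ∀ a : α, ({k : α | wayBelow k k ∧ k ≤ a}).Nonempty ∧
    DirectedOn (· ≤ ·) {k : α | wayBelow k k ∧ k ≤ a} ∧
    IsLUB {k : α | wayBelow k k ∧ k ≤ a} a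

/-!
Every theory is the directed union of the closures of its finite subsets, and these closures
are exactly the compact theories: a finite set of tokens contained in a directed union of
theories already lies in one of them. Least upper bounds of bounded families, and of directed
ones, are obtained as deductive closures of unions.
-/

namespace AlgInfoSys

variable {D : Type*} (A : AlgInfoSys D)

section Entailment

variable {A} {u v w : Set D}

lemma entails_trans (huv : A.entails u v) (hvw : A.entails v w) : A.entails u w :=
  A.trans u w {v} (Set.finite_singleton v) (by simpa using huv) (by simpa using hvw)

lemma entails_of_subset_left (h : A.entails u v) (huw : u ⊆ w) (hw : w.Finite) :
    A.entails w v :=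
  entails_trans (A.refl w u hw huw) h

lemma entails_singleton_of_mem (h : A.entails u v) {d : D} (hd : d ∈ v) : A.entails u {d} :=
  entails_trans h (A.refl v {d} (A.entails_finite u v h).2 (Set.singleton_subset_iff.2 hd))

lemma entails_of_forall_entails_singleton (hv : v.Finite) (h : ∀ d ∈ v, A.entails u {d}) :
    A.entails u v := by
  refine A.trans u v ((fun d => {d}) '' v) (hv.image _) ?_ ?_
  · rintro _ ⟨d, hd, rfl⟩
    exact h d hd
  · simpa [Set.sUnion_image] using A.refl v v hv subset_rfl

end Entailment

section Closure

variable {A} {x y u v : Set D}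

lemma subset_closure (x : Set D) : x ⊆ A.closure x := fun d hd =>
  ⟨{d}, Set.singleton_subset_iff.2 hd, A.refl {d} {d} (Set.finite_singleton d) subset_rfl⟩

lemma closure_mono (h : x ⊆ y) : A.closure x ⊆ A.closure y := fun _ ⟨u, hu, he⟩ =>
  ⟨u, hu.trans h, he⟩

lemma closure_subset_iff (hy : A.IsElement y) : A.closure x ⊆ y ↔ x ⊆ y :=
  ⟨(subset_closure x).trans, fun h _ ⟨u, hu, he⟩ => hy.2 u _ (hu.trans h) he rfl⟩

lemma exists_entails_of_subset_closure (hu : u.Finite) (h : u ⊆ A.closure x) :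
    ∃ w ⊆ x, A.entails w u := by
  have h' : ∀ d ∈ u, ∃ w ⊆ x, A.entails w {d} := h
  choose! w hwx hwd using h'
  have hfin : (⋃ d ∈ u, w d).Finite :=
    hu.biUnion fun d hd => (A.entails_finite _ _ (hwd d hd)).1
  exact ⟨⋃ d ∈ u, w d, Set.iUnion₂_subset hwx, entails_of_forall_entails_singleton hu
    fun d hd => entails_of_subset_left (hwd d hd) (Set.subset_biUnion_of_mem hd) hfin⟩

lemma closure_closed (h : u ⊆ A.closure x) (huv : A.entails u v) : v ⊆ A.closure x := by
  obtain ⟨w, hwx, hwu⟩ := exists_entails_of_subset_closure (A.entails_finite u v huv).1 h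
  exact fun d hd => ⟨w, hwx, entails_singleton_of_mem (entails_trans hwu huv) hd⟩

lemma isElement_closure_iff : A.IsElement (A.closure x) ↔ A.nabla ∉ A.closure x :=
  ⟨And.left, fun h => ⟨h, fun _ _ => closure_closed⟩⟩

lemma isElement_closure_of_subset (hy : A.IsElement y) (h : x ⊆ y) :
    A.IsElement (A.closure x) :=
  isElement_closure_iff.2 fun hn => hy.1 ((closure_subset_iff hy).2 h hn)

variable (A) in
lemma isElement_closure_empty : A.IsElement (A.closure ∅) :=
  isElement_closure_iff.2 fun ⟨_, hu, he⟩ => A.nondegen (Set.subset_empty_iff.1 hu ▸ he)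

end Closure

abbrev Domain : Type _ := {x : Set D // A.IsElement x}

section Domain

variable {A} {S : Set A.Domain}

lemma isLUB_of_subset_closure_iUnion {m : A.Domain} (hub : m ∈ upperBounds S)
    (hm : m.val ⊆ A.closure (⋃ s ∈ S, s.val)) : IsLUB S m :=
  ⟨hub, fun c hc => hm.trans ((closure_subset_iff c.2).2 (Set.iUnion₂_subset hc))⟩

lemma exists_mem_subset_of_directedOn (hS : S.Nonempty) (hdir : DirectedOn (· ≤ ·) S)
    {u : Set D} (hu : u.Finite) (h : u ⊆ ⋃ s ∈ S, s.val) : ∃ s ∈ S, u ⊆ s.val := by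
  simpa using hdir.exists_mem_subset_of_finset_subset_biUnion (f := Subtype.val) hS
    (s := hu.toFinset) (by simpa using h)

lemma isElement_iUnion_of_directedOn (hS : S.Nonempty) (hdir : DirectedOn (· ≤ ·) S) :
    A.IsElement (⋃ s ∈ S, s.val) := by
  constructor
  · intro hn
    obtain ⟨s, -, hs⟩ := Set.mem_iUnion₂.1 hn
    exact s.2.1 hs
  · intro u v hu huv
    obtain ⟨s, hs, hus⟩ :=
      exists_mem_subset_of_directedOn hS hdir (A.entails_finite u v huv).1 hu
    exact (s.2.2 u v hus huv).trans (Set.subset_biUnion_of_mem hs)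

lemma val_subset_iUnion_of_isLUB (hS : S.Nonempty) (hdir : DirectedOn (· ≤ ·) S)
    {b : A.Domain} (hb : IsLUB S b) : b.val ⊆ ⋃ s ∈ S, s.val := by
  have hub : (⟨_, isElement_iUnion_of_directedOn hS hdir⟩ : A.Domain) ∈ upperBounds S :=
    fun _ hs => Set.subset_biUnion_of_mem hs
  exact hb.2 hub

variable (A) in
theorem isDcpo_domain : IsDcpo A.Domain := by
  intro S hdir
  rcases S.eq_empty_or_nonempty with rfl | hS
  · exact ⟨⟨_, isElement_closure_empty A⟩, isLUB_of_subset_closure_iUnion (by simp) (by simp)⟩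
  · exact ⟨⟨_, isElement_iUnion_of_directedOn hS hdir⟩,
      isLUB_of_subset_closure_iUnion (fun _ hs => Set.subset_biUnion_of_mem hs)
        (subset_closure _)⟩

variable (A) in
theorem boundedComplete_domain : BoundedComplete A.Domain := by
  rintro S ⟨b, hb⟩
  exact ⟨⟨_, isElement_closure_of_subset b.2 (Set.iUnion₂_subset hb)⟩,
    isLUB_of_subset_closure_iUnion
      (fun _ hs => (Set.subset_biUnion_of_mem hs).trans (subset_closure _)) subset_rfl⟩

variable (A) in
def finiteClosuresBelow (a : A.Domain) : Set A.Domain :=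
  {y | ∃ u : Set D, u.Finite ∧ u ⊆ a.val ∧ y.val = A.closure u}

lemma finiteClosuresBelow_nonempty (a : A.Domain) : (A.finiteClosuresBelow a).Nonempty :=
  ⟨⟨_, isElement_closure_empty A⟩, ∅, Set.finite_empty, Set.empty_subset _, rfl⟩

lemma directedOn_finiteClosuresBelow (a : A.Domain) :
    DirectedOn (· ≤ ·) (A.finiteClosuresBelow a) := by
  rintro y ⟨u, hu, hua, hy⟩ z ⟨v, hv, hva, hz⟩
  have huv : u ∪ v ⊆ a.val := Set.union_subset hua hva
  refine ⟨⟨_, isElement_closure_of_subset a.2 huv⟩, ⟨u ∪ v, hu.union hv, huv, rfl⟩, ?_, ?_⟩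
  · exact Subtype.coe_le_coe.1 (hy ▸ closure_mono Set.subset_union_left)
  · exact Subtype.coe_le_coe.1 (hz ▸ closure_mono Set.subset_union_right)

lemma isLUB_finiteClosuresBelow (a : A.Domain) : IsLUB (A.finiteClosuresBelow a) a := by
  refine isLUB_of_subset_closure_iUnion ?_ fun d hd => subset_closure _ ?_
  · rintro y ⟨u, -, hua, hy⟩
    exact Subtype.coe_le_coe.1 (hy ▸ (closure_subset_iff a.2).2 hua)
  · have hda : {d} ⊆ a.val := Set.singleton_subset_iff.2 hd
    exact Set.mem_biUnion (x := ⟨_, isElement_closure_of_subset a.2 hda⟩)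
      ⟨{d}, Set.finite_singleton d, hda, rfl⟩ (subset_closure {d} rfl)

lemma wayBelow_self_of_finite {y : A.Domain} {u : Set D} (hu : u.Finite)
    (hy : y.val = A.closure u) : wayBelow y y := by
  intro S hS hdir b hb hyb
  have huy : u ⊆ y.val := hy ▸ subset_closure u
  obtain ⟨s, hs, hus⟩ := exists_mem_subset_of_directedOn hS hdir hu
    (huy.trans (Subtype.coe_le_coe.2 hyb |>.trans (val_subset_iUnion_of_isLUB hS hdir hb)))
  exact ⟨s, hs, Subtype.coe_le_coe.1 (hy ▸ (closure_subset_iff s.2).2 hus)⟩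

-- Compactness of `k`, tested against the directed family of finite closures below `k`.
lemma mem_finiteClosuresBelow_self {k : A.Domain} (hk : wayBelow k k) :
    k ∈ A.finiteClosuresBelow k := by
  obtain ⟨s, hs, hks⟩ := hk _ (finiteClosuresBelow_nonempty k)
    (directedOn_finiteClosuresBelow k) k (isLUB_finiteClosuresBelow k) le_rfl
  rwa [← le_antisymm hks ((isLUB_finiteClosuresBelow k).1 hs)] at hs

lemma setOf_wayBelow_self_le_eq (a : A.Domain) :
    {k : A.Domain | wayBelow k k ∧ k ≤ a} = A.finiteClosuresBelow a := by
  ext k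
  constructor
  · rintro ⟨hk, hka⟩
    obtain ⟨u, hu, huk, hk⟩ := mem_finiteClosuresBelow_self hk
    exact ⟨u, hu, huk.trans hka, hk⟩
  · intro hk
    refine ⟨?_, (isLUB_finiteClosuresBelow a).1 hk⟩
    obtain ⟨u, hu, -, hku⟩ := hk
    exact wayBelow_self_of_finite hu hku

variable (A) in
theorem isAlgebraicDom_domain : IsAlgebraicDom A.Domain := fun a => by
  rw [setOf_wayBelow_self_le_eq]
  exact ⟨finiteClosuresBelow_nonempty a, directedOn_finiteClosuresBelow a,
    isLUB_finiteClosuresBelow a⟩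

end Domain

end AlgInfoSys

/-- the domain `|A|` of an algebraic information system, ordered by
inclusion, is an algebraic Scott domain: directed complete with least element the
deductive closure of `∅`, bounded complete, and algebraic. -/
theorem stmt2 {D : Type*} (A : AlgInfoSys D) :
    (A.IsElement (A.closure ∅) ∧ ∀ x : Set D, A.IsElement x → A.closure ∅ ⊆ x) ∧
    IsDcpo {x : Set D // A.IsElement x} ∧
    BoundedComplete {x : Set D // A.IsElement x} ∧
    IsAlgebraicDom {x : Set D // A.IsElement x} :=
  ⟨⟨A.isElement_closure_empty, fun _ hx => (A.closure_subset_iff hx).2 (Set.empty_subset _)⟩,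
    A.isDcpo_domain, A.boundedComplete_domain, A.isAlgebraicDom_domain⟩
end

section
/- Let A be an algebraic Scott domain and let p : A → A be a Scott continuous projection (p ∘ p = p and p(x) ⊑ x for all x). Then the set Fix(p) = {x ∈ A | p(x) = x}, with the order induced from A, is an algebraic dcpo (i.e., p is finitary) if and only if for all compact elements x₀, z₀ of A with z₀ ⊑ p(x₀) there exists a compact element y₀ of A with z₀ ⊑ y₀ ⊑ x₀ and p(y₀) = y₀. -/
/-- `K` is a basis of a continuous dcpo: for every `a`, the set of elements of `K`
way below `a` is (nonempty and) directed with least upper bound `a`. -/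
def IsDomBasis {α : Type*} [Preorder α] (K : Set α) : Prop :=
  ∀ a : α, ({k ∈ K | wayBelow k a}).Nonempty ∧
    DirectedOn (· ≤ ·) {k ∈ K | wayBelow k a} ∧
    IsLUB {k ∈ K | wayBelow k a} a

/-- Scott open sets: upper sets inaccessible by least upper bounds of nonempty
directed sets. -/
def ScottOpen {α : Type*} [Preorder α] (U : Set α) : Prop :=
  (∀ x ∈ U, ∀ y, x ≤ y → y ∈ U) ∧
  ∀ S : Set α, S.Nonempty → DirectedOn (· ≤ ·) S → ∀ b : α, IsLUB S b → b ∈ U → ∃ s ∈ S, s ∈ U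

/-- Interior in the Scott topology: the largest Scott open subset. -/
def scottInt {α : Type*} [Preorder α] (B : Set α) : Set α :=
  ⋃₀ {U : Set α | ScottOpen U ∧ U ⊆ B}

/-- Negative information about `x`: the elements inconsistent with `x`
(the pair has no upper bound). -/
def negSet {α : Type*} [Preorder α] (x : α) : Set α :=
  {y | ¬∃ b, x ≤ b ∧ y ≤ b}

/-- `J_x = {y | x ∈ Int (I_y)}`, the continuous approximation of `I_x = negSet x`. -/
def jSet {α : Type*} [Preorder α] (x : α) : Set α :=
  {y | x ∈ scottInt (negSet y)}

/-- The set of total (maximal) elements. -/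
def TotalElems (α : Type*) [Preorder α] : Set α := {x | ∀ y, x ≤ y → y = x}

/-!
Directed sups of fixed points of `p` are fixed points (Scott continuity, and `p ≤ id` for the
empty sup), so `Fix(p)` is a dcpo whose directed sups are computed in `A`; hence an element of
`Fix(p)` is compact there iff it is compact in `A`, the retraction `x ↦ p x` carrying directed
sets of `A` to directed sets of `Fix(p)`.

If `Fix(p)` is algebraic, a compact `z₀ ≤ p x₀` lies below some compact fixed point approximating
`p x₀`, which is below `x₀`. Conversely, for a fixed point `a`, write `a = p a` as the directed
sup of the `p j` with `j ≪ j ≤ a`: a compact `z ≤ a` lies below some `p j`, and the condition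
interpolates a compact fixed point between `z` and `j`. So the compact fixed points below `a` are
cofinal among the compacts below `a`, and by bounded completeness they are directed, since the
join of two compacts is compact.
-/

open Set

section Preorder

variable {α : Type*} [Preorder α]

lemma wayBelow.trans_le {x y z : α} (hxy : wayBelow x y) (hyz : y ≤ z) : wayBelow x z :=
  fun S hne hdir b hb hzb => hxy S hne hdir b hb (hyz.trans hzb)

lemma IsLUB.wayBelow_of_pair {x y m z : α} (hm : IsLUB {x, y} m) (hx : wayBelow x z)
    (hy : wayBelow y z) : wayBelow m z := by
  intro S hne hdir b hb hzb
  obtain ⟨s, hs, hxs⟩ := hx S hne hdir b hb hzb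
  obtain ⟨t, ht, hyt⟩ := hy S hne hdir b hb hzb
  obtain ⟨u, hu, hsu, htu⟩ := hdir s hs t ht
  refine ⟨u, hu, hm.2 ?_⟩
  rintro _ (rfl | rfl)
  exacts [hxs.trans hsu, hyt.trans htu]

lemma IsBot.wayBelow {b : α} (hb : IsBot b) (y : α) : wayBelow b y :=
  fun _ ⟨s, hs⟩ _ _ _ _ => ⟨s, hs, hb s⟩

lemma isLUB_of_isLUB_image_val {P : α → Prop} {T : Set (Subtype P)} {b : Subtype P}
    (h : IsLUB (Subtype.val '' T) b.1) : IsLUB T b :=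
  ⟨fun _ ht => h.1 (mem_image_of_mem _ ht),
    fun _ hu => h.2 (forall_mem_image.2 fun _ ht => hu ht)⟩

end Preorder

section FixedPoints

variable {α : Type*} [PartialOrder α] {p : α → α}

lemma apply_eq_self_of_isLUB (hcont : ScottContinuous p) (hproj : ∀ x, p x ≤ x) {S : Set α}
    (hS : ∀ s ∈ S, p s = s) (hdir : DirectedOn (· ≤ ·) S) {b : α} (hb : IsLUB S b) : p b = b := by
  rcases S.eq_empty_or_nonempty with rfl | hne
  · exact le_antisymm (hproj b) (isLUB_empty_iff.1 hb (p b))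
  · have hpS : p '' S = S := (image_congr hS).trans (image_id' S)
    exact (hpS ▸ hcont hne hdir hb).unique hb

lemma exists_isLUB_image_val_fixed (hd : IsDcpo α) (hcont : ScottContinuous p)
    (hproj : ∀ x, p x ≤ x) {T : Set {x : α // p x = x}} (hT : DirectedOn (· ≤ ·) T) :
    ∃ c, p c = c ∧ IsLUB (Subtype.val '' T) c := by
  have hT' : DirectedOn (· ≤ ·) (Subtype.val '' T) := directedOn_image.2 hT
  obtain ⟨c, hc⟩ := hd _ hT'
  exact ⟨c, apply_eq_self_of_isLUB hcont hproj (forall_mem_image.2 fun t _ => t.2) hT' hc, hc⟩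

lemma isDcpo_fixed (hd : IsDcpo α) (hcont : ScottContinuous p) (hproj : ∀ x, p x ≤ x) :
    IsDcpo {x : α // p x = x} := fun _ hT =>
  let ⟨c, hpc, hc⟩ := exists_isLUB_image_val_fixed hd hcont hproj hT
  ⟨⟨c, hpc⟩, isLUB_of_isLUB_image_val hc⟩

lemma IsLUB.image_val_fixed (hd : IsDcpo α) (hcont : ScottContinuous p) (hproj : ∀ x, p x ≤ x)
    {T : Set {x : α // p x = x}} (hT : DirectedOn (· ≤ ·) T) {b : {x : α // p x = x}}
    (hb : IsLUB T b) : IsLUB (Subtype.val '' T) b.1 := by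
  obtain ⟨c, hpc, hc⟩ := exists_isLUB_image_val_fixed hd hcont hproj hT
  obtain rfl : b = ⟨c, hpc⟩ := hb.unique (isLUB_of_isLUB_image_val hc)
  exact hc

lemma wayBelow_self_val_iff (hd : IsDcpo α) (hcont : ScottContinuous p) (hidem : p ∘ p = p)
    (hproj : ∀ x, p x ≤ x) {k : {x : α // p x = x}} : wayBelow k.1 k.1 ↔ wayBelow k k := by
  constructor
  · intro hk T hne hdir b hb hkb
    obtain ⟨_, ⟨t, ht, rfl⟩, hkt⟩ := hk _ (hne.image _) (directedOn_image.2 hdir) _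
      (hb.image_val_fixed hd hcont hproj hdir) hkb
    exact ⟨t, ht, hkt⟩
  · intro hk S hne hdir b hb hkb
    let r : α → {x : α // p x = x} := fun x => ⟨p x, congrFun hidem x⟩
    have hlub : IsLUB (r '' S) (r b) := by
      refine isLUB_of_isLUB_image_val ?_
      rw [image_image]
      exact hcont hne hdir hb
    obtain ⟨_, ⟨s, hs, rfl⟩, hks⟩ := hk _ (hne.image r)
      (hdir.mono_comp fun _ _ h => hcont.monotone h) _ hlub (k.2.symm.le.trans (hcont.monotone hkb))
    exact ⟨s, hs, le_trans (b := p s) hks (hproj s)⟩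

theorem exists_compact_fixed_between (hd : IsDcpo α) (hcont : ScottContinuous p)
    (hidem : p ∘ p = p) (hproj : ∀ x, p x ≤ x) (hfix : IsAlgebraicDom {x : α // p x = x})
    {x₀ z₀ : α} (hz₀ : wayBelow z₀ z₀) (hle : z₀ ≤ p x₀) :
    ∃ y₀ : α, wayBelow y₀ y₀ ∧ z₀ ≤ y₀ ∧ y₀ ≤ x₀ ∧ p y₀ = y₀ := by
  obtain ⟨hne, hdir, hlub⟩ := hfix ⟨p x₀, congrFun hidem x₀⟩
  obtain ⟨_, ⟨k, hk, rfl⟩, hzk⟩ := hz₀ _ (hne.image _) (directedOn_image.2 hdir) _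
    (hlub.image_val_fixed hd hcont hproj hdir) hle
  exact ⟨k, (wayBelow_self_val_iff hd hcont hidem hproj).2 hk.1, hzk,
    le_trans (b := p x₀) hk.2 (hproj x₀), k.2⟩

variable (hcond : ∀ x₀ z₀ : α, wayBelow x₀ x₀ → wayBelow z₀ z₀ → z₀ ≤ p x₀ →
  ∃ y₀ : α, wayBelow y₀ y₀ ∧ z₀ ≤ y₀ ∧ y₀ ≤ x₀ ∧ p y₀ = y₀)
include hcond

lemma isCofinalFor_compact_fixed (ha : IsAlgebraicDom α) (hcont : ScottContinuous p) {a : α}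
    (hpa : p a = a) :
    IsCofinalFor {k | wayBelow k k ∧ k ≤ a} {k | (wayBelow k k ∧ k ≤ a) ∧ p k = k} := by
  rintro z ⟨hz, hza⟩
  obtain ⟨hKne, hKdir, hKlub⟩ := ha a
  have hpK : IsLUB (p '' {k | wayBelow k k ∧ k ≤ a}) a := by
    simpa only [hpa] using hcont hKne hKdir hKlub
  obtain ⟨_, ⟨j, hj, rfl⟩, hzj⟩ :=
    hz _ (hKne.image p) (hKdir.mono_comp fun _ _ h => hcont.monotone h) a hpK hza
  obtain ⟨y, hy, hzy, hyj, hpy⟩ := hcond j z hj.1 hz hzj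
  exact ⟨y, ⟨⟨hy, hyj.trans hj.2⟩, hpy⟩, hzy⟩

lemma directedOn_compact_fixed (hb : BoundedComplete α) (ha : IsAlgebraicDom α)
    (hcont : ScottContinuous p) {a : α} (hpa : p a = a) :
    DirectedOn (· ≤ ·) {k | (wayBelow k k ∧ k ≤ a) ∧ p k = k} := by
  rintro k₁ ⟨⟨hk₁, hk₁a⟩, -⟩ k₂ ⟨⟨hk₂, hk₂a⟩, -⟩
  obtain ⟨m, hm⟩ := hb {k₁, k₂} ⟨a, by rintro _ (rfl | rfl) <;> assumption⟩
  have hk₁m : k₁ ≤ m := hm.1 (by simp)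
  have hk₂m : k₂ ≤ m := hm.1 (by simp)
  have hma : m ≤ a := hm.2 (by rintro _ (rfl | rfl) <;> assumption)
  have hmm : wayBelow m m := hm.wayBelow_of_pair (hk₁.trans_le hk₁m) (hk₂.trans_le hk₂m)
  obtain ⟨y, hy, hmy⟩ := isCofinalFor_compact_fixed hcond ha hcont hpa ⟨hmm, hma⟩
  exact ⟨y, hy, hk₁m.trans hmy, hk₂m.trans hmy⟩

theorem isAlgebraicDom_fixed (hd : IsDcpo α) (hb : BoundedComplete α) (ha : IsAlgebraicDom α)
    (hcont : ScottContinuous p) (hidem : p ∘ p = p) (hproj : ∀ x, p x ≤ x) :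
    IsAlgebraicDom {x : α // p x = x} := by
  rintro ⟨a, hpa⟩
  have hval : Subtype.val '' {k : {x : α // p x = x} | wayBelow k k ∧ k ≤ ⟨a, hpa⟩} =
      {k | (wayBelow k k ∧ k ≤ a) ∧ p k = k} := by
    ext x
    constructor
    · rintro ⟨k, ⟨hk, hka⟩, rfl⟩
      exact ⟨⟨(wayBelow_self_val_iff hd hcont hidem hproj).2 hk, hka⟩, k.2⟩
    · rintro ⟨⟨hx, hxa⟩, hpx⟩
      exact ⟨⟨x, hpx⟩, ⟨(wayBelow_self_val_iff hd hcont hidem hproj).1 hx, hxa⟩, rfl⟩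
  refine ⟨?_, ?_, ?_⟩
  · obtain ⟨bot, hlub⟩ := hd ∅ IsChain.empty.directedOn
    have hbot : IsBot bot := isLUB_empty_iff.1 hlub
    rw [← image_nonempty, hval]
    exact ⟨bot, ⟨hbot.wayBelow bot, hbot a⟩, le_antisymm (hproj bot) (hbot _)⟩
  · refine (directedOn_image (f := Subtype.val)).1 ?_
    rw [hval]
    exact directedOn_compact_fixed hcond hb ha hcont hpa
  · refine isLUB_of_isLUB_image_val ?_
    rw [hval]
    exact (ha a).2.2.of_isCofinalFor (fun _ hk => hk.1)
      (isCofinalFor_compact_fixed hcond ha hcont hpa)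

end FixedPoints

/-- a Scott continuous projection `p` of an algebraic Scott domain is
finitary (its set of fixed points, with the induced order, is an algebraic dcpo)
iff for all compact `x₀, z₀` with `z₀ ≤ p x₀` there is a compact fixed point `y₀`
with `z₀ ≤ y₀ ≤ x₀`. -/
theorem stmt5 {α : Type*} [PartialOrder α]
    (hd : IsDcpo α) (hb : BoundedComplete α) (ha : IsAlgebraicDom α)
    (p : α → α) (hcont : ScottContinuous p) (hidem : p ∘ p = p)
    (hproj : ∀ x : α, p x ≤ x) :
    (IsDcpo {x : α // p x = x} ∧ IsAlgebraicDom {x : α // p x = x}) ↔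
    (∀ x₀ z₀ : α, wayBelow x₀ x₀ → wayBelow z₀ z₀ → z₀ ≤ p x₀ →
      ∃ y₀ : α, wayBelow y₀ y₀ ∧ z₀ ≤ y₀ ∧ y₀ ≤ x₀ ∧ p y₀ = y₀) := by
  constructor
  · rintro ⟨-, hfix⟩ x₀ z₀ - hz₀ hle
    exact exists_compact_fixed_between hd hcont hidem hproj hfix hz₀ hle
  · intro hcond
    exact ⟨isDcpo_fixed hd hcont hproj, isAlgebraicDom_fixed hcond hd hb ha hcont hidem hproj⟩
end

section
/- Let A be an algebraic dcpo whose basis K consists of the compact elements of A, with K countable. Let w : K → ℝ assign strictly positive weights with ∑_{k∈K} w(k) = 1, and define μ(U) = ∑_{k ∈ U ∩ K} w(k) for each Scott open set U ⊆ A. Then μ is a CC-valuation on the Scott topology of A: it is a normalized valuation (μ(∅)=0, μ(A)=1, monotone, and μ(U)+μ(V)=μ(U∩V)+μ(U∪V)), continuous (for every directed system of open sets {U_i}, μ(⋃_i U_i) = sup_i μ(U_i)), strongly non-degenerate (U ⊊ V open implies μ(U) < μ(V)), and co-continuous (for every filtered system of open sets {U_i}, μ(Int(⋂_i U_i)) =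 inf_i μ(U_i)). -/
/-!
`μ U` is the total weight of `U ∩ K`, the sum of `U.indicator (K.indicator w)`, a summable
nonnegative function; monotonicity and modularity are pointwise facts about indicators. Along a
directed (or filtered) family of sets, membership of each point is eventually constant, so the
indicators converge pointwise and dominated convergence gives (co-)continuity. A point of `V \ U`
is approximated by a basis element of `V`, which stays outside the upper set `U` and has positive
weight. A compact `k` lies in the Scott interior of an upper set `B` once it lies in `B`, since `↑k`
is Scott open; hence `Int (⋂ 𝒰)` and `⋂ 𝒰` contain the same basis elements.
-/

open Filter Topology

section WeightedMass

variable {ι : Type*} {g : ι → ℝ}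

noncomputable def weightedMass (g : ι → ℝ) (s : Set ι) : ℝ :=
  ∑' i, s.indicator g i

@[simp]
theorem weightedMass_empty (g : ι → ℝ) : weightedMass g ∅ = 0 := by
  simp [weightedMass]

theorem weightedMass_univ (g : ι → ℝ) : weightedMass g Set.univ = ∑' i, g i := by
  rw [weightedMass, Set.indicator_univ]

theorem weightedMass_indicator (w : ι → ℝ) (s K : Set ι) :
    weightedMass (K.indicator w) s = ∑' k : ↥(s ∩ K), w k := by
  rw [weightedMass, Set.indicator_indicator, tsum_subtype]

theorem weightedMass_indicator_congr {w : ι → ℝ} {s t K : Set ι} (h : s ∩ K = t ∩ K) :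
    weightedMass (K.indicator w) s = weightedMass (K.indicator w) t := by
  rw [weightedMass_indicator, weightedMass_indicator, h]

theorem weightedMass_mono (hg : Summable g) (hg0 : 0 ≤ g) {s t : Set ι} (h : s ⊆ t) :
    weightedMass g s ≤ weightedMass g t :=
  (hg.indicator s).tsum_le_tsum (Set.indicator_le_indicator_of_subset h hg0) (hg.indicator t)

theorem weightedMass_lt (hg : Summable g) (hg0 : 0 ≤ g) {s t : Set ι} {i : ι} (h : s ⊆ t)
    (hit : i ∈ t) (his : i ∉ s) (hi : 0 < g i) : weightedMass g s < weightedMass g t :=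
  (hg.indicator s).tsum_lt_tsum (i := i) (Set.indicator_le_indicator_of_subset h hg0)
    (by simpa [his, hit] using hi) (hg.indicator t)

theorem weightedMass_add_weightedMass (hg : Summable g) (s t : Set ι) :
    weightedMass g s + weightedMass g t = weightedMass g (s ∩ t) + weightedMass g (s ∪ t) := by
  simp only [weightedMass, ← (hg.indicator _).tsum_add (hg.indicator _),
    add_comm ((s ∩ t).indicator g _), Set.indicator_union_add_inter_apply]

theorem tendsto_weightedMass (hg : Summable g) (hg0 : 0 ≤ g) {β : Type*} {l : Filter β}
    {s : β → Set ι} {t : Set ι} (h : ∀ i, ∀ᶠ b in l, i ∈ s b ↔ i ∈ t) :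
    Tendsto (fun b => weightedMass g (s b)) l (𝓝 (weightedMass g t)) := by
  refine tendsto_tsum_of_dominated_convergence hg (fun i => ?_) (.of_forall fun b i => ?_)
  · refine tendsto_const_nhds.congr' ((h i).mono fun b hb => ?_)
    by_cases hi : i ∈ t <;> simp [hi, hb]
  · rw [Real.norm_eq_abs, abs_of_nonneg (Set.indicator_nonneg (fun j _ => hg0 j) i)]
    exact Set.indicator_le_self' (fun j _ => hg0 j) i

theorem weightedMass_sUnion (hg : Summable g) (hg0 : 0 ≤ g) {𝒮 : Set (Set ι)}
    (hne : 𝒮.Nonempty) (hdir : DirectedOn (· ⊆ ·) 𝒮) :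
    weightedMass g (⋃₀ 𝒮) = sSup (weightedMass g '' 𝒮) := by
  have : Nonempty 𝒮 := hne.to_subtype
  have : IsDirectedOrder 𝒮 := hdir.isDirectedOrder
  have hlim : Tendsto (fun s : 𝒮 => weightedMass g s) atTop (𝓝 (weightedMass g (⋃₀ 𝒮))) := by
    refine tendsto_weightedMass hg hg0 fun i => ?_
    by_cases hi : i ∈ ⋃₀ 𝒮
    · obtain ⟨s, hs, his⟩ := hi
      exact (eventually_ge_atTop ⟨s, hs⟩).mono fun u hu => iff_of_true (hu his) ⟨s, hs, his⟩
    · exact .of_forall fun u => iff_of_false (fun hiu => hi ⟨u, u.2, hiu⟩) hi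
  have hub : weightedMass g (⋃₀ 𝒮) ∈ upperBounds (weightedMass g '' 𝒮) := by
    rintro _ ⟨s, hs, rfl⟩
    exact weightedMass_mono hg hg0 (Set.subset_sUnion_of_mem hs)
  have hcl := mem_closure_of_tendsto hlim (.of_forall fun s => Set.mem_image_of_mem _ s.2)
  exact ((isLUB_of_mem_closure hub hcl).csSup_eq (hne.image _)).symm

theorem weightedMass_sInter (hg : Summable g) (hg0 : 0 ≤ g) {𝒮 : Set (Set ι)}
    (hne : 𝒮.Nonempty) (hdir : DirectedOn (· ⊇ ·) 𝒮) :
    weightedMass g (⋂₀ 𝒮) = sInf (weightedMass g '' 𝒮) := by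
  have : Nonempty 𝒮 := hne.to_subtype
  have : IsCodirectedOrder 𝒮 := hdir.isCodirectedOrder
  have hlim : Tendsto (fun s : 𝒮 => weightedMass g s) atBot (𝓝 (weightedMass g (⋂₀ 𝒮))) := by
    refine tendsto_weightedMass hg hg0 fun i => ?_
    by_cases hi : i ∈ ⋂₀ 𝒮
    · exact .of_forall fun u => iff_of_true (hi u u.2) hi
    · obtain ⟨s, hs, his⟩ : ∃ s ∈ 𝒮, i ∉ s := by simpa using hi
      exact (eventually_le_atBot ⟨s, hs⟩).mono fun u hu => iff_of_false (fun h => his (hu h)) hi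
  have hlb : weightedMass g (⋂₀ 𝒮) ∈ lowerBounds (weightedMass g '' 𝒮) := by
    rintro _ ⟨s, hs, rfl⟩
    exact weightedMass_mono hg hg0 (Set.sInter_subset_of_mem hs)
  have hcl := mem_closure_of_tendsto hlim (.of_forall fun s => Set.mem_image_of_mem _ s.2)
  exact ((isGLB_of_mem_closure hlb hcl).csInf_eq (hne.image _)).symm

end WeightedMass

section ScottTopology

variable {α : Type*} [Preorder α]

theorem ScottOpen.isUpperSet {U : Set α} (hU : ScottOpen U) : IsUpperSet U :=
  fun _ _ hxy hx => hU.1 _ hx _ hxy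

theorem ScottOpen.exists_mem_basis_le {K V : Set α} {a : α} (hV : ScottOpen V)
    (hB : IsDomBasis K) (ha : a ∈ V) : ∃ k ∈ K, k ≤ a ∧ k ∈ V := by
  obtain ⟨hne, hdir, hlub⟩ := hB a
  obtain ⟨k, hk, hkV⟩ := hV.2 _ hne hdir a hlub ha
  exact ⟨k, hk.1, hlub.1 hk, hkV⟩

theorem scottOpen_Ici_of_wayBelow_self {k : α} (hk : wayBelow k k) : ScottOpen (Set.Ici k) :=
  ⟨fun _ hx _ hxy => le_trans hx hxy, hk⟩

theorem mem_scottInt_iff_of_wayBelow_self {B : Set α} {k : α} (hB : IsUpperSet B)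
    (hk : wayBelow k k) : k ∈ scottInt B ↔ k ∈ B :=
  ⟨fun ⟨_, ⟨_, hUB⟩, hkU⟩ => hUB hkU,
    fun hkB => ⟨Set.Ici k, ⟨scottOpen_Ici_of_wayBelow_self hk, fun _ hy => hB hy hkB⟩, le_rfl⟩⟩

theorem scottInt_inter_eq {B K : Set α} (hB : IsUpperSet B) (hK : K ⊆ {k | wayBelow k k}) :
    scottInt B ∩ K = B ∩ K :=
  Set.ext fun _ => and_congr_left fun hk => mem_scottInt_iff_of_wayBelow_self hB (hK hk)

end ScottTopology

theorem stmt8_general {α : Type*} [PartialOrder α]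
    (K : Set α) (hB : IsDomBasis K)
    (hKcomp : K = {a : α | wayBelow a a})
    (w : α → ℝ) (hwpos : ∀ k ∈ K, 0 < w k)
    (hsum : Summable fun k : K => w (k : α))
    (hsum1 : ∑' k : K, w (k : α) = 1)
    (μ : Set α → ℝ) (hμ : ∀ U : Set α, μ U = ∑' k : ↥(U ∩ K), w (k : α)) :
    μ ∅ = 0 ∧ μ Set.univ = 1 ∧
    (∀ U V : Set α, ScottOpen U → ScottOpen V → U ⊆ V → μ U ≤ μ V) ∧
    (∀ U V : Set α, ScottOpen U → ScottOpen V → μ U + μ V = μ (U ∩ V) + μ (U ∪ V)) ∧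
    (∀ 𝒰 : Set (Set α), 𝒰.Nonempty → (∀ U ∈ 𝒰, ScottOpen U) → DirectedOn (· ⊆ ·) 𝒰 →
      μ (⋃₀ 𝒰) = sSup (μ '' 𝒰)) ∧
    (∀ U V : Set α, ScottOpen U → ScottOpen V → U ⊂ V → μ U < μ V) ∧
    (∀ 𝒰 : Set (Set α), 𝒰.Nonempty → (∀ U ∈ 𝒰, ScottOpen U) → DirectedOn (· ⊇ ·) 𝒰 →
      μ (scottInt (⋂₀ 𝒰)) = sInf (μ '' 𝒰)) := by
  have hg : Summable (K.indicator w) := summable_subtype_iff_indicator.1 hsum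
  have hg0 : 0 ≤ K.indicator w := Set.indicator_nonneg fun k hk => (hwpos k hk).le
  obtain rfl : μ = weightedMass (K.indicator w) :=
    funext fun U => (hμ U).trans (weightedMass_indicator w U K).symm
  refine ⟨weightedMass_empty _, ?_, fun U V _ _ => weightedMass_mono hg hg0,
    fun U V _ _ => weightedMass_add_weightedMass hg U V,
    fun 𝒰 hne _ hdir => weightedMass_sUnion hg hg0 hne hdir, ?_, ?_⟩
  · rw [weightedMass_univ, ← tsum_subtype, hsum1]
  · intro U V hU hV hUV
    obtain ⟨a, haV, haU⟩ := Set.exists_of_ssubset hUV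
    obtain ⟨k, hkK, hka, hkV⟩ := hV.exists_mem_basis_le hB haV
    refine weightedMass_lt hg hg0 hUV.subset hkV (fun hkU => haU (hU.isUpperSet hka hkU)) ?_
    simpa [hkK] using hwpos k hkK
  · intro 𝒰 hne hopen hdir
    have hup : IsUpperSet (⋂₀ 𝒰) := isUpperSet_sInter fun U hU => (hopen U hU).isUpperSet
    rw [weightedMass_indicator_congr (scottInt_inter_eq hup hKcomp.subset),
      weightedMass_sInter hg hg0 hne hdir]

/-- on an algebraic dcpo whose (countable) basis `K` consists of the
compact elements, the valuation `μ U = ∑_{k ∈ U ∩ K} w k` obtained from strictly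
positive weights summing to `1` is a CC-valuation: a normalized valuation which is
continuous, strongly non-degenerate, and co-continuous. -/
theorem stmt8 {α : Type*} [PartialOrder α]
    (hd : IsDcpo α) (K : Set α) (hKc : K.Countable) (hB : IsDomBasis K)
    (hKcomp : K = {a : α | wayBelow a a})
    (w : α → ℝ) (hwpos : ∀ k ∈ K, 0 < w k)
    (hsum : Summable fun k : K => w (k : α))
    (hsum1 : ∑' k : K, w (k : α) = 1)
    (μ : Set α → ℝ) (hμ : ∀ U : Set α, μ U = ∑' k : ↥(U ∩ K), w (k : α)) :
    μ ∅ = 0 ∧ μ Set.univ = 1 ∧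
    (∀ U V : Set α, ScottOpen U → ScottOpen V → U ⊆ V → μ U ≤ μ V) ∧
    (∀ U V : Set α, ScottOpen U → ScottOpen V → μ U + μ V = μ (U ∩ V) + μ (U ∪ V)) ∧
    (∀ 𝒰 : Set (Set α), 𝒰.Nonempty → (∀ U ∈ 𝒰, ScottOpen U) → DirectedOn (· ⊆ ·) 𝒰 →
      μ (⋃₀ 𝒰) = sSup (μ '' 𝒰)) ∧
    (∀ U V : Set α, ScottOpen U → ScottOpen V → U ⊂ V → μ U < μ V) ∧
    (∀ 𝒰 : Set (Set α), 𝒰.Nonempty → (∀ U ∈ 𝒰, ScottOpen U) → DirectedOn (· ⊇ ·) 𝒰 →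
      μ (scottInt (⋂₀ 𝒰)) = sInf (μ '' 𝒰)) :=
  stmt8_general K hB hKcomp w hwpos hsum hsum1 μ hμ
end

section
/- Let A be a bounded-complete continuous dcpo (a continuous Scott domain) with countable basis K containing the least element ⊥. Let w : K → ℝ satisfy w(⊥) = 0, w(k) > 0 for k ≠ ⊥, and ∑_{k∈K} w(k) = 1. For x ∈ A put K_x = {k ∈ K | k ≪ x} and define u(x,y) = 1 − ∑_{k ∈ K_x ∩ K_y} w(k). Then: (a) u is a partial metric: u(x,y) = u(y,x); u(x,x) ≤ u(x,y); if x ⊑ y then u(x,x) = u(x,y), and if x ⋢ y then u(x,x) < u(x,y); and u(x,z) ≤ u(x,y) + u(y,z) − u(y,y); (b) u is Scott continuous as a map into the reals with reversed order: u is antitone in each argument and, for every directed B ⊆ A and y ∈ A, u(⊔B, y) = inf_{x∈B} u(x,y); (c) the relaxed metric topology determined by u — in which U ⊆ A is open iff for every x ∈ U there is ε > u(x,x) with {y ∈ A | u(x,y) < ε} ⊆ U — coincides with the Scott topology on A. -/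
/-! `u x y` is, up to a constant, minus the weight of `K_x ∩ K_y`. The partial metric axioms
therefore reduce to inclusions between the sets `K_x` and to monotonicity and modularity of the
weight of a set; strictness uses a basis element way below `x` but not below `y`, which is not `⊥`
and so has positive weight. Scott continuity holds because `K_{⊔B} = ⋃_{x ∈ B} K_x` for directed
`B` (by interpolation), while the weight of a set is approximated by finite subsets, which
directedness puts into a single `K_x`. A Scott open `U ∋ x` contains some `k ∈ K_x`, and the ball
around `x` of radius `u x x + w k` consists of points above `k`. -/

section WayBelow

variable {α : Type*} [Preorder α] {k k' x y : α}

lemma wayBelow.mono_right (h : wayBelow k x) (hxy : x ≤ y) : wayBelow k y :=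
  fun S hS hdir b hb hyb => h S hS hdir b hb (hxy.trans hyb)

lemma wayBelow.mono_left (h : wayBelow k x) (hk : k' ≤ k) : wayBelow k' x :=
  fun S hS hdir b hb hxb => (h S hS hdir b hb hxb).imp fun _ ⟨hs, hks⟩ => ⟨hs, hk.trans hks⟩

lemma wayBelow.le (h : wayBelow k x) : k ≤ x := by
  obtain ⟨s, rfl, hks⟩ := h {x} (Set.singleton_nonempty x) (directedOn_singleton x) x
    isLUB_singleton le_rfl
  exact hks

end WayBelow

section BasisApprox

variable {α : Type*} [Preorder α] {K : Set α}

/-- The set `K_x` of the statement. -/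
def basisApprox (K : Set α) (x : α) : Set α := {k ∈ K | wayBelow k x}

lemma basisApprox_mono : Monotone (basisApprox K) :=
  fun _ _ hxy _ hk => ⟨hk.1, hk.2.mono_right hxy⟩

namespace IsDomBasis

lemma exists_mem_basisApprox_not_le (hK : IsDomBasis K) {x y : α} (h : ¬ x ≤ y) :
    ∃ k ∈ basisApprox K x, ¬ k ≤ y := by
  by_contra! hle
  exact h ((hK x).2.2.2 hle)

lemma exists_wayBelow_wayBelow (hK : IsDomBasis K) {k b : α} (hk : wayBelow k b) :
    ∃ d ∈ basisApprox K b, wayBelow k d := by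
  let T := ⋃ d : basisApprox K b, basisApprox K (d : α)
  have hTdir : DirectedOn (· ≤ ·) T := by
    refine Set.directedOn_iUnion ?_ fun d => (hK d).2.1
    rintro ⟨d₁, hd₁⟩ ⟨d₂, hd₂⟩
    obtain ⟨d, hd, h₁, h₂⟩ := (hK b).2.1 d₁ hd₁ d₂ hd₂
    exact ⟨⟨d, hd⟩, basisApprox_mono h₁, basisApprox_mono h₂⟩
  have hTlub : IsLUB T b := (isLUB_iUnion_iff_of_isLUB (fun d : basisApprox K b => (hK d).2.2) b).1
    (by rw [Subtype.range_coe]; exact (hK b).2.2)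
  have hTne : T.Nonempty := by
    obtain ⟨d, hd⟩ := (hK b).1
    obtain ⟨c, hc⟩ := (hK d).1
    exact ⟨c, Set.mem_iUnion.2 ⟨⟨d, hd⟩, hc⟩⟩
  obtain ⟨c, hcT, hkc⟩ := hk T hTne hTdir b hTlub le_rfl
  obtain ⟨d, hcd⟩ := Set.mem_iUnion.1 hcT
  exact ⟨d, d.2, hcd.2.mono_left hkc⟩

lemma basisApprox_subset_biUnion (hK : IsDomBasis K) {B : Set α} {b : α} (hne : B.Nonempty)
    (hdir : DirectedOn (· ≤ ·) B) (hb : IsLUB B b) :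
    basisApprox K b ⊆ ⋃ x ∈ B, basisApprox K x := by
  intro k ⟨hkK, hkb⟩
  obtain ⟨d, ⟨-, hdb⟩, hkd⟩ := hK.exists_wayBelow_wayBelow hkb
  obtain ⟨x, hxB, hdx⟩ := hdb B hne hdir b hb le_rfl
  exact Set.mem_biUnion hxB ⟨hkK, hkd.mono_right hdx⟩

end IsDomBasis

end BasisApprox

section SubtypeSums

variable {ι : Type*} {f : ι → ℝ} {s t : Set ι}

lemma tsum_subtype_mono (hf0 : 0 ≤ f) (hf : Summable f) (h : s ⊆ t) :
    ∑' k : s, f k ≤ ∑' k : t, f k := by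
  rw [tsum_subtype, tsum_subtype]
  exact (hf.indicator s).tsum_le_tsum (Set.indicator_le_indicator_of_subset h hf0)
    (hf.indicator t)

lemma tsum_subtype_union_add_inter (hf : Summable f) (s t : Set ι) :
    ∑' k : ↥(s ∪ t), f k + ∑' k : ↥(s ∩ t), f k = ∑' k : s, f k + ∑' k : t, f k := by
  simp only [tsum_subtype]
  rw [← (hf.indicator _).tsum_add (hf.indicator _), ← (hf.indicator _).tsum_add (hf.indicator _)]
  exact tsum_congr (Set.indicator_union_add_inter_apply f s t)

lemma tsum_subtype_add_le {k : ι} (hf0 : 0 ≤ f) (hf : Summable f) (hk : k ∉ s)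
    (h : insert k s ⊆ t) : ∑' i : s, f i + f k ≤ ∑' i : t, f i := by
  have hsk : ∑' i : ↥(insert k s), f i = ∑' i : s, f i + f k := by
    rw [Set.insert_eq, Set.union_comm, (hf.subtype _).tsum_union_disjoint
      (Set.disjoint_singleton_right.2 hk) (hf.subtype _), tsum_singleton]
  exact hsk ▸ tsum_subtype_mono hf0 hf h

lemma exists_finset_subset_lt_sum (hf0 : 0 ≤ f) (hf : Summable f) {r : ℝ}
    (hr : r < ∑' k : s, f k) : ∃ t : Finset ι, ↑t ⊆ s ∧ r < ∑ k ∈ t, f k := by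
  have hlub := isLUB_hasSum (f := fun k : s => f k) (fun k => hf0 k) (hf.subtype s).hasSum
  obtain ⟨_, ⟨t : Finset s, rfl⟩, hrt⟩ := (lt_isLUB_iff hlub).1 hr
  exact ⟨t.map (Function.Embedding.subtype _), by simp, by simpa using hrt⟩

end SubtypeSums

section PartialMetric

variable {α : Type*} [Preorder α] {K : Set α} {f : α → ℝ}

/-- The function `u` of the statement, for weights `f`. -/
noncomputable def basisPartialMetric (K : Set α) (f : α → ℝ) (x y : α) : ℝ :=
  1 - ∑' k : ↥(basisApprox K x ∩ basisApprox K y), f k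

lemma basisPartialMetric_indicator (K : Set α) (f : α → ℝ) :
    basisPartialMetric K (K.indicator f) = basisPartialMetric K f := by
  funext x y
  exact congrArg (1 - ·) (tsum_congr fun k => Set.indicator_of_mem k.2.1.1 f)

lemma basisPartialMetric_self (x : α) :
    basisPartialMetric K f x x = 1 - ∑' k : basisApprox K x, f k := by
  rw [basisPartialMetric, Set.inter_self]

lemma basisPartialMetric_comm (x y : α) :
    basisPartialMetric K f x y = basisPartialMetric K f y x := by
  rw [basisPartialMetric, Set.inter_comm, basisPartialMetric]

lemma basisPartialMetric_antitone_left (hf0 : 0 ≤ f) (hf : Summable f) {x x' : α} (y : α)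
    (hxx' : x ≤ x') : basisPartialMetric K f x' y ≤ basisPartialMetric K f x y :=
  sub_le_sub_left (tsum_subtype_mono hf0 hf
    (Set.inter_subset_inter_left _ (basisApprox_mono hxx'))) 1

lemma basisPartialMetric_self_le (hf0 : 0 ≤ f) (hf : Summable f) (x y : α) :
    basisPartialMetric K f x x ≤ basisPartialMetric K f x y := by
  rw [basisPartialMetric_self]
  exact sub_le_sub_left (tsum_subtype_mono hf0 hf Set.inter_subset_left) 1

lemma basisPartialMetric_self_eq_of_le {x y : α} (hxy : x ≤ y) :
    basisPartialMetric K f x x = basisPartialMetric K f x y := by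
  rw [basisPartialMetric_self, basisPartialMetric,
    Set.inter_eq_self_of_subset_left (basisApprox_mono hxy)]

lemma basisPartialMetric_le_of_not_wayBelow (hf0 : 0 ≤ f) (hf : Summable f) {x y k : α}
    (hk : k ∈ basisApprox K x) (hky : ¬ wayBelow k y) :
    basisPartialMetric K f x x + f k ≤ basisPartialMetric K f x y := by
  have := tsum_subtype_add_le (s := basisApprox K x ∩ basisApprox K y) hf0 hf
    (fun h => hky h.2.2) (Set.insert_subset hk Set.inter_subset_left)
  rw [basisPartialMetric_self, basisPartialMetric]
  linarith

lemma basisPartialMetric_self_lt_of_not_le (hK : IsDomBasis K) (hf0 : 0 ≤ f) (hf : Summable f)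
    (hpos : ∀ k ∈ K, ¬ IsBot k → 0 < f k) {x y : α} (hxy : ¬ x ≤ y) :
    basisPartialMetric K f x x < basisPartialMetric K f x y := by
  obtain ⟨k, hk, hky⟩ := hK.exists_mem_basisApprox_not_le hxy
  have hfk : 0 < f k := hpos k hk.1 fun hbot => hky (hbot y)
  linarith [basisPartialMetric_le_of_not_wayBelow hf0 hf hk fun h => hky h.le]

lemma basisPartialMetric_triangle (hf0 : 0 ≤ f) (hf : Summable f) (x y z : α) :
    basisPartialMetric K f x z ≤
      basisPartialMetric K f x y + basisPartialMetric K f y z - basisPartialMetric K f y y := by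
  set A := basisApprox K x ∩ basisApprox K y
  set B := basisApprox K y ∩ basisApprox K z
  have hunion : ∑' k : ↥(A ∪ B), f k ≤ ∑' k : basisApprox K y, f k :=
    tsum_subtype_mono hf0 hf (Set.union_subset Set.inter_subset_right Set.inter_subset_left)
  have hinter : ∑' k : ↥(A ∩ B), f k ≤ ∑' k : ↥(basisApprox K x ∩ basisApprox K z), f k :=
    tsum_subtype_mono hf0 hf fun k hk => ⟨hk.1.1, hk.2.2⟩
  have := tsum_subtype_union_add_inter hf A B
  rw [basisPartialMetric_self, basisPartialMetric, basisPartialMetric, basisPartialMetric]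
  linarith

lemma basisPartialMetric_eq_sInf_of_isLUB (hK : IsDomBasis K) (hf0 : 0 ≤ f) (hf : Summable f)
    {B : Set α} (y : α) {b : α} (hne : B.Nonempty) (hdir : DirectedOn (· ≤ ·) B)
    (hb : IsLUB B b) :
    basisPartialMetric K f b y = sInf ((fun x => basisPartialMetric K f x y) '' B) := by
  refine (IsGLB.csInf_eq ⟨?_, fun l hl => ?_⟩ (hne.image _)).symm
  · rintro _ ⟨x, hx, rfl⟩
    exact basisPartialMetric_antitone_left hf0 hf y (hb.1 hx)
  · by_contra! hlt
    obtain ⟨t, hts, hlt⟩ := exists_finset_subset_lt_sum hf0 hf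
      (show 1 - l < ∑' k : ↥(basisApprox K b ∩ basisApprox K y), f k by
        rw [basisPartialMetric] at hlt; linarith)
    obtain ⟨x, hx, htx⟩ := DirectedOn.exists_mem_subset_of_finset_subset_biUnion hne
      (hdir.mono fun _ _ h => basisApprox_mono h)
      (hts.trans (Set.inter_subset_left.trans (hK.basisApprox_subset_biUnion hne hdir hb)))
    have hsum_le : ∑ k ∈ t, f k ≤ ∑' k : ↥(basisApprox K x ∩ basisApprox K y), f k :=
      Finset.tsum_subtype t f ▸ tsum_subtype_mono hf0 hf (Set.subset_inter htx (hts.trans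
        Set.inter_subset_right))
    have hlx : l ≤ basisPartialMetric K f x y := hl ⟨x, hx, rfl⟩
    rw [basisPartialMetric] at hlx
    linarith

end PartialMetric

section RelaxedTopology

variable {α : Type*} [Preorder α] {K : Set α} {f : α → ℝ} {U : Set α}

lemma ScottOpen.exists_ball_subset (hK : IsDomBasis K) (hf0 : 0 ≤ f) (hf : Summable f)
    (hpos : ∀ k ∈ K, ¬ IsBot k → 0 < f k) (hU : ScottOpen U) {x : α} (hx : x ∈ U) :
    ∃ ε : ℝ, basisPartialMetric K f x x < ε ∧ {y : α | basisPartialMetric K f x y < ε} ⊆ U := by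
  obtain ⟨k, hk, hkU⟩ := hU.2 _ (hK x).1 (hK x).2.1 x (hK x).2.2 hx
  by_cases hbot : IsBot k
  · exact ⟨basisPartialMetric K f x x + 1, by linarith, fun y _ => hU.1 k hkU y (hbot y)⟩
  refine ⟨basisPartialMetric K f x x + f k, by linarith [hpos k hk.1 hbot], fun y hy => ?_⟩
  have hky : wayBelow k y := by
    by_contra hky
    exact (basisPartialMetric_le_of_not_wayBelow hf0 hf hk hky).not_gt hy
  exact hU.1 k hkU y hky.le

lemma scottOpen_of_forall_exists_ball_subset (hK : IsDomBasis K) (hf0 : 0 ≤ f)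
    (hf : Summable f) (h : ∀ x ∈ U, ∃ ε : ℝ, basisPartialMetric K f x x < ε ∧
      {y : α | basisPartialMetric K f x y < ε} ⊆ U) : ScottOpen U := by
  refine ⟨fun x hx y hxy => ?_, fun S hne hdir b hb hbU => ?_⟩
  · obtain ⟨ε, hε, hball⟩ := h x hx
    exact hball ((basisPartialMetric_self_eq_of_le hxy).symm.trans_lt hε :)
  · obtain ⟨ε, hε, hball⟩ := h b hbU
    rw [basisPartialMetric_eq_sInf_of_isLUB hK hf0 hf b hne hdir hb] at hε
    obtain ⟨_, ⟨x, hx, rfl⟩, hxε⟩ := exists_lt_of_csInf_lt (hne.image _) hε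
    exact ⟨x, hx, hball (show basisPartialMetric K f b x < ε by rwa [basisPartialMetric_comm])⟩

lemma scottOpen_iff_forall_exists_ball_subset (hK : IsDomBasis K) (hf0 : 0 ≤ f)
    (hf : Summable f) (hpos : ∀ k ∈ K, ¬ IsBot k → 0 < f k) :
    ScottOpen U ↔ ∀ x ∈ U, ∃ ε : ℝ, basisPartialMetric K f x x < ε ∧
      {y : α | basisPartialMetric K f x y < ε} ⊆ U :=
  ⟨fun hU _ hx => hU.exists_ball_subset hK hf0 hf hpos hx,
    scottOpen_of_forall_exists_ball_subset hK hf0 hf⟩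

end RelaxedTopology

theorem stmt11_general {α : Type*} [PartialOrder α]
    (K : Set α) (hK : IsDomBasis K)
    (bot : α) (hbot : ∀ a : α, bot ≤ a)
    (w : α → ℝ) (hw0 : w bot = 0) (hwpos : ∀ k ∈ K, k ≠ bot → 0 < w k)
    (hsum : Summable fun k : K => w (k : α))
    (u : α → α → ℝ)
    (hu : ∀ x y : α,
      u x y = 1 - ∑' k : ↥({k ∈ K | wayBelow k x} ∩ {k ∈ K | wayBelow k y}), w (k : α)) :
    -- (a) u is a partial metric
    (∀ x y : α, u x y = u y x) ∧
    (∀ x y : α, u x x ≤ u x y) ∧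
    (∀ x y : α, x ≤ y → u x x = u x y) ∧
    (∀ x y : α, ¬ x ≤ y → u x x < u x y) ∧
    (∀ x y z : α, u x z ≤ u x y + u y z - u y y) ∧
    -- (b) u is Scott continuous into the reals with reversed order
    (∀ x x' y : α, x ≤ x' → u x' y ≤ u x y) ∧
    (∀ (B : Set α) (y b : α), B.Nonempty → DirectedOn (· ≤ ·) B → IsLUB B b →
      u b y = sInf ((fun x => u x y) '' B)) ∧
    -- (c) the relaxed metric topology coincides with the Scott topology
    (∀ U : Set α, ScottOpen U ↔
      ∀ x ∈ U, ∃ ε : ℝ, u x x < ε ∧ {y : α | u x y < ε} ⊆ U) := by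
  have hf0 : 0 ≤ K.indicator w := fun k => Set.indicator_apply_nonneg fun hk => by
    rcases eq_or_ne k bot with rfl | hne
    exacts [hw0.ge, (hwpos k hk hne).le]
  have hf : Summable (K.indicator w) := summable_subtype_iff_indicator.1 hsum
  have hpos : ∀ k ∈ K, ¬ IsBot k → 0 < K.indicator w k := fun k hk hk' => by
    rw [Set.indicator_of_mem hk]
    exact hwpos k hk fun h => hk' (h ▸ hbot)
  obtain rfl : u = basisPartialMetric K (K.indicator w) := by
    rw [basisPartialMetric_indicator]
    funext x y
    exact hu x y
  exact ⟨basisPartialMetric_comm, basisPartialMetric_self_le hf0 hf,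
    fun _ _ => basisPartialMetric_self_eq_of_le,
    fun _ _ => basisPartialMetric_self_lt_of_not_le hK hf0 hf hpos,
    basisPartialMetric_triangle hf0 hf,
    fun _ _ y => basisPartialMetric_antitone_left hf0 hf y,
    fun _ y _ => basisPartialMetric_eq_sInf_of_isLUB hK hf0 hf y,
    fun _ => scottOpen_iff_forall_exists_ball_subset hK hf0 hf hpos⟩

/-- on a bounded complete continuous dcpo with countable basis `K`
containing `⊥`, with weights `w` (zero at `⊥`, positive elsewhere, total sum `1`),
the function `u x y = 1 − ∑_{k ∈ K_x ∩ K_y} w k` is a partial metric, is Scott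
continuous (antitone, turning directed lubs into infima), and its relaxed metric
topology is the Scott topology. -/
theorem stmt11 {α : Type*} [PartialOrder α]
    (hd : IsDcpo α) (hb : BoundedComplete α)
    (K : Set α) (hKc : K.Countable) (hK : IsDomBasis K)
    (bot : α) (hbot : ∀ a : α, bot ≤ a) (hbotK : bot ∈ K)
    (w : α → ℝ) (hw0 : w bot = 0) (hwpos : ∀ k ∈ K, k ≠ bot → 0 < w k)
    (hsum : Summable fun k : K => w (k : α))
    (hsum1 : ∑' k : K, w (k : α) = 1)
    (u : α → α → ℝ)
    (hu : ∀ x y : α,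
      u x y = 1 - ∑' k : ↥({k ∈ K | wayBelow k x} ∩ {k ∈ K | wayBelow k y}), w (k : α)) :
    -- (a) u is a partial metric
    (∀ x y : α, u x y = u y x) ∧
    (∀ x y : α, u x x ≤ u x y) ∧
    (∀ x y : α, x ≤ y → u x x = u x y) ∧
    (∀ x y : α, ¬ x ≤ y → u x x < u x y) ∧
    (∀ x y z : α, u x z ≤ u x y + u y z - u y y) ∧
    -- (b) u is Scott continuous into the reals with reversed order
    (∀ x x' y : α, x ≤ x' → u x' y ≤ u x y) ∧
    (∀ (B : Set α) (y b : α), B.Nonempty → DirectedOn (· ≤ ·) B → IsLUB B b →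
      u b y = sInf ((fun x => u x y) '' B)) ∧
    -- (c) the relaxed metric topology coincides with the Scott topology
    (∀ U : Set α, ScottOpen U ↔
      ∀ x ∈ U, ∃ ε : ℝ, u x x < ε ∧ {y : α | u x y < ε} ⊆ U) :=
  stmt11_general K hK bot hbot w hw0 hwpos hsum u hu
end

section
/- Let A be a partially ordered set, I a set, and μ a real-valued function on subsets of I with μ(∅) = 0, μ(I) = 1, which is monotone (U ⊆ V implies μ(U) ≤ μ(V)) and modular (μ(U) + μ(V) = μ(U ∩ V) + μ(U ∪ V)). Let Info, Neginfo : A → P(I) satisfy: x ⊑ y if and only if Info(x) ⊆ Info(y); Info(x) ∩ Neginfo(x) = ∅; and x ⊑ y implies Neginfo(x) ⊆ Neginfo(y). Define u(x,y) = 1 − μ(Info(x) ∩ Info(y)) − μ(Neginfo(x) ∩ Neginfo(y)) and l(x,y) = μ(Info(x) ∩ Neginfo(y)) + μ(Info(y) ∩ Neginfo(x)). Then for all x, y, z ∈ A: (1) u(x,y) = u(y,x); (2) u(x,x) ≤ u(x,y); (3) u(x,z) ≤ u(x,y) + u(y,z) − u(y,y) (the Vickers–Matthews triangle inequality); (4)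 if x ⊑ y then u(x,x) = u(x,y); and (5) l(x,y) ≤ u(x,y). -/
/-!
Only two facts about a monotone modular `μ` are needed: `μ (a ⊓ c) + μ (c ⊓ b) ≤ μ (a ⊓ b) + μ c`,
which applied to the positive and to the negative information gives the triangle inequality, and
additivity on disjoint elements, which bounds `l + (1 - u)`, the measure of four pairwise disjoint
meets, by `μ ⊤ = 1`.
-/

section ModularValuation

variable {α : Type*} {μ : α → ℝ}

theorem modular_inf_add_inf_le [Lattice α] (hmono : Monotone μ)
    (hmod : ∀ a b, μ a + μ b = μ (a ⊓ b) + μ (a ⊔ b)) (a b c : α) :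
    μ (a ⊓ c) + μ (c ⊓ b) ≤ μ (a ⊓ b) + μ c := by
  have hinf : (a ⊓ c) ⊓ (c ⊓ b) ≤ a ⊓ b :=
    le_inf (inf_le_left.trans inf_le_left) (inf_le_right.trans inf_le_right)
  have hsup : (a ⊓ c) ⊔ (c ⊓ b) ≤ c := sup_le inf_le_right inf_le_left
  linarith [hmod (a ⊓ c) (c ⊓ b), hmono hinf, hmono hsup]

theorem modular_sup_eq_add_of_disjoint [Lattice α] [OrderBot α]
    (hmod : ∀ a b, μ a + μ b = μ (a ⊓ b) + μ (a ⊔ b)) (h0 : μ ⊥ = 0) {a b : α}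
    (h : Disjoint a b) : μ (a ⊔ b) = μ a + μ b := by
  rw [hmod, h.eq_bot, h0, zero_add]

end ModularValuation

section RelaxedMetric

variable {A α : Type*} {μ : α → ℝ} {P N : A → α}

/-- `P`, `N` play the roles of `Info`, `Neginfo`; `upperDist` and `lowerDist` are `u` and `l`. -/
def upperDist [Lattice α] (μ : α → ℝ) (P N : A → α) (x y : A) : ℝ :=
  1 - μ (P x ⊓ P y) - μ (N x ⊓ N y)

def lowerDist [Lattice α] (μ : α → ℝ) (P N : A → α) (x y : A) : ℝ :=
  μ (P x ⊓ N y) + μ (P y ⊓ N x)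

theorem upperDist_comm [Lattice α] (x y : A) : upperDist μ P N x y = upperDist μ P N y x := by
  simp only [upperDist, inf_comm]

theorem upperDist_self_le [Lattice α] (hmono : Monotone μ) (x y : A) :
    upperDist μ P N x x ≤ upperDist μ P N x y := by
  simp only [upperDist, inf_idem]
  linarith [hmono (inf_le_left : P x ⊓ P y ≤ P x), hmono (inf_le_left : N x ⊓ N y ≤ N x)]

theorem upperDist_triangle [Lattice α] (hmono : Monotone μ)
    (hmod : ∀ a b, μ a + μ b = μ (a ⊓ b) + μ (a ⊔ b)) (x y z : A) :
    upperDist μ P N x z ≤ upperDist μ P N x y + upperDist μ P N y z - upperDist μ P N y y := by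
  simp only [upperDist, inf_idem]
  linarith [modular_inf_add_inf_le hmono hmod (P x) (P z) (P y),
    modular_inf_add_inf_le hmono hmod (N x) (N z) (N y)]

theorem upperDist_self_eq_of_le [Lattice α] [Preorder A] (hP : Monotone P) (hN : Monotone N)
    {x y : A} (h : x ≤ y) : upperDist μ P N x x = upperDist μ P N x y := by
  simp only [upperDist, inf_idem, inf_eq_left.mpr (hP h), inf_eq_left.mpr (hN h)]

theorem lowerDist_le_upperDist [DistribLattice α] [BoundedOrder α] (hmono : Monotone μ)
    (hmod : ∀ a b, μ a + μ b = μ (a ⊓ b) + μ (a ⊔ b)) (h0 : μ ⊥ = 0) (h1 : μ ⊤ = 1)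
    (hdisj : ∀ x, Disjoint (P x) (N x)) (x y : A) :
    lowerDist μ P N x y ≤ upperDist μ P N x y := by
  have hx := hdisj x
  have hy := hdisj y
  have d12 : Disjoint (P x ⊓ N y) (P y ⊓ N x) := hy.symm.mono inf_le_right inf_le_left
  have d3 : Disjoint (P x ⊓ N y ⊔ P y ⊓ N x) (P x ⊓ P y) :=
    (hy.symm.mono inf_le_right inf_le_right).sup_left (hx.symm.mono inf_le_right inf_le_left)
  have d4 : Disjoint (P x ⊓ N y ⊔ P y ⊓ N x ⊔ P x ⊓ P y) (N x ⊓ N y) :=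
    ((hx.mono inf_le_left inf_le_left).sup_left (hy.mono inf_le_left inf_le_right)).sup_left
      (hx.mono inf_le_left inf_le_left)
  have htop := hmono (le_top : P x ⊓ N y ⊔ P y ⊓ N x ⊔ P x ⊓ P y ⊔ N x ⊓ N y ≤ ⊤)
  rw [modular_sup_eq_add_of_disjoint hmod h0 d4, modular_sup_eq_add_of_disjoint hmod h0 d3,
    modular_sup_eq_add_of_disjoint hmod h0 d12, h1] at htop
  simp only [lowerDist, upperDist]
  linarith

end RelaxedMetric

/-- properties of the relaxed metric induced by a μInfo-structure:
given a normalized monotone modular set function `μ` and maps `Info`, `Neginfo`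
satisfying the positive- and negative-information axioms, the upper part
`u(x,y) = 1 − μ(Info x ∩ Info y) − μ(Neginfo x ∩ Neginfo y)` is symmetric, has
small self-distances, satisfies the Vickers–Matthews triangle inequality, is
constant on comparable pairs, and dominates the lower part
`l(x,y) = μ(Info x ∩ Neginfo y) + μ(Info y ∩ Neginfo x)`. -/
theorem stmt13 {A I : Type*} [PartialOrder A]
    (μ : Set I → ℝ)
    (h0 : μ ∅ = 0) (h1 : μ Set.univ = 1)
    (hmono : ∀ U V : Set I, U ⊆ V → μ U ≤ μ V)
    (hmod : ∀ U V : Set I, μ U + μ V = μ (U ∩ V) + μ (U ∪ V))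
    (Info Neginfo : A → Set I)
    (hinfo : ∀ x y : A, x ≤ y ↔ Info x ⊆ Info y)
    (hdisj : ∀ x : A, Info x ∩ Neginfo x = ∅)
    (hneg : ∀ x y : A, x ≤ y → Neginfo x ⊆ Neginfo y)
    (u l : A → A → ℝ)
    (hu : ∀ x y : A, u x y = 1 - μ (Info x ∩ Info y) - μ (Neginfo x ∩ Neginfo y))
    (hl : ∀ x y : A, l x y = μ (Info x ∩ Neginfo y) + μ (Info y ∩ Neginfo x)) :
    (∀ x y : A, u x y = u y x) ∧
    (∀ x y : A, u x x ≤ u x y) ∧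
    (∀ x y z : A, u x z ≤ u x y + u y z - u y y) ∧
    (∀ x y : A, x ≤ y → u x x = u x y) ∧
    (∀ x y : A, l x y ≤ u x y) := by
  obtain rfl : u = upperDist μ Info Neginfo := funext₂ hu
  obtain rfl : l = lowerDist μ Info Neginfo := funext₂ hl
  have hmono' : Monotone μ := fun U V => hmono U V
  exact ⟨upperDist_comm, upperDist_self_le hmono', upperDist_triangle hmono' hmod,
    fun x y => upperDist_self_eq_of_le (fun x y => (hinfo x y).mp) (hneg · ·),
    lowerDist_le_upperDist hmono' hmod h0 h1
      (fun x => Set.disjoint_iff_inter_eq_empty.mpr (hdisj x))⟩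
end

section
/- Let A be a coherently continuous dcpo with countable basis K: A is a continuous dcpo with countable basis K such that for any two basic elements k, k' ∈ K the set MUB(k,k') of minimal upper bounds of k and k' is finite, and for every x ∈ A with k ⊑ x and k' ⊑ x there exists k'' ∈ MUB(k,k') with k'' ⊑ x. Then for every x ∈ A the set I_x = {y ∈ A | the pair {x,y} has no upper bound in A} is Scott open. -/
/-- The set of minimal upper bounds of `k` and `k'`. -/
def MUBSet {α : Type*} [Preorder α] (k k' : α) : Set α :=
  {m | k ≤ m ∧ k' ≤ m ∧ ∀ m' : α, k ≤ m' → k' ≤ m' → m' ≤ m → m ≤ m'}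

/-!
If every element of a directed set `S` has a common upper bound with `x`, then so has `b = ⊔ S`.
Approximate `x` and `b` by increasing sequences `aₙ`, `cₙ` of basis elements. Since `cₙ ≪ b`,
`cₙ` lies below an element of `S`, so `aₙ` and `cₙ` have a common upper bound and the finite set
`MUB(aₙ, cₙ)` is nonempty. By coherence every element of `MUB(aₙ₊₁, cₙ₊₁)` lies above an element
of `MUB(aₙ, cₙ)`, so Kőnig's lemma gives an increasing chain `mₙ ∈ MUB(aₙ, cₙ)`, whose supremum
bounds both `x` and `b`.
-/

lemma exists_seq_rel_of_levels_upTo {β : Type*} {G : ℕ → Set β} {R : β → β → Prop}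
    (hne : ∀ n, (G n).Nonempty) (hstep : ∀ n, ∀ m ∈ G (n + 1), ∃ m' ∈ G n, R m' m) :
    ∀ N, ∀ m ∈ G N, ∃ f : ℕ → β, (∀ n, f n ∈ G n) ∧ f N = m ∧ ∀ n < N, R (f n) (f (n + 1)) := by
  intro N
  induction N with
  | zero =>
    intro m hm
    refine ⟨Function.update (fun n => (hne n).some) 0 m, fun n => ?_, by simp, by simp⟩
    rcases n with _ | n
    · simpa using hm
    · simpa using (hne (n + 1)).some_mem
  | succ N ih =>
    intro m hm
    obtain ⟨m', hm', hR⟩ := hstep N m hm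
    obtain ⟨f, hfG, hfN, hfR⟩ := ih m' hm'
    refine ⟨Function.update f (N + 1) m, fun n => ?_, by simp, fun n hn => ?_⟩
    · rcases eq_or_ne n (N + 1) with rfl | h
      · simpa using hm
      · simpa [h] using hfG n
    · rcases Nat.lt_succ_iff_lt_or_eq.mp hn with hn | rfl
      · rw [Function.update_of_ne (hn.trans N.lt_succ_self).ne,
          Function.update_of_ne (Nat.succ_lt_succ hn).ne]
        exact hfR n hn
      · simpa [hfN] using hR

lemma exists_seq_rel_of_finite_levels {β : Type*} {G : ℕ → Set β} {R : β → β → Prop}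
    (hfin : ∀ n, (G n).Finite) (hne : ∀ n, (G n).Nonempty)
    (hstep : ∀ n, ∀ m ∈ G (n + 1), ∃ m' ∈ G n, R m' m) :
    ∃ f : ℕ → β, (∀ n, f n ∈ G n) ∧ ∀ n, R (f n) (f (n + 1)) := by
  let : TopologicalSpace β := ⊥
  have : DiscreteTopology β := ⟨rfl⟩
  -- Kőnig's lemma by compactness: the sets of sequences through the levels that are `R`-chains
  -- up to level `N` form a decreasing sequence of nonempty closed subsets of the compact `∏ₙ G n`.
  let t : ℕ → Set (ℕ → β) := fun N => Set.pi Set.univ G ∩ {f | ∀ n < N, R (f n) (f (n + 1))}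
  have ht_closed : ∀ N, IsClosed (t N) := by
    intro N
    refine (isClosed_set_pi fun n _ => isClosed_discrete (G n)).inter ?_
    simp only [Set.ofPred_forall]
    exact isClosed_iInter fun n => isClosed_iInter fun _ =>
      (isClosed_discrete {p : β × β | R p.1 p.2}).preimage
        (f := fun g : ℕ → β => (g n, g (n + 1))) (by fun_prop)
  have ht_nonempty : ∀ N, (t N).Nonempty := by
    intro N
    obtain ⟨f, hfG, -, hfR⟩ := exists_seq_rel_of_levels_upTo hne hstep N _ (hne N).some_mem
    exact ⟨f, fun n _ => hfG n, hfR⟩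
  obtain ⟨f, hf⟩ := IsCompact.nonempty_iInter_of_sequence_nonempty_isCompact_isClosed t
    (fun N => Set.inter_subset_inter_right _ fun f hf n hn => hf n (Nat.lt_succ_of_lt hn))
    ht_nonempty ((isCompact_univ_pi fun n => (hfin n).isCompact).of_isClosed_subset (ht_closed 0)
      Set.inter_subset_left)
    ht_closed
  simp only [Set.mem_iInter] at hf
  exact ⟨f, fun n => (hf 0).1 n trivial, fun n => (hf (n + 1)).2 n n.lt_succ_self⟩

lemma DirectedOn.exists_monotone_cofinal_seq {α : Type*} [Preorder α] {S : Set α}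
    (hdir : DirectedOn (· ≤ ·) S) (hc : S.Countable) (hne : S.Nonempty) :
    ∃ c : ℕ → α, (∀ n, c n ∈ S) ∧ Monotone c ∧ ∀ s ∈ S, ∃ n, s ≤ c n := by
  have := hc.to_subtype
  let := Encodable.ofCountable S
  have : Inhabited S := ⟨⟨hne.some, hne.some_mem⟩⟩
  have hd : Directed (· ≤ ·) (Subtype.val : S → α) := hdir.directed_val
  exact ⟨Subtype.val ∘ hd.sequence Subtype.val, fun n => (hd.sequence _ n).2, hd.sequence_mono,
    fun s hs => ⟨_, hd.le_sequence ⟨s, hs⟩⟩⟩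

section

variable {α : Type*} [Preorder α]

lemma IsDomBasis.exists_monotone_seq_isLUB {K : Set α} (hK : IsDomBasis K) (hKc : K.Countable)
    (x : α) :
    ∃ a : ℕ → α, Monotone a ∧ (∀ n, a n ∈ K ∧ wayBelow (a n) x) ∧ IsLUB (Set.range a) x := by
  obtain ⟨hne, hdir, hlub⟩ := hK x
  obtain ⟨a, haK, ha, hcof⟩ := hdir.exists_monotone_cofinal_seq (hKc.mono (Set.sep_subset _ _)) hne
  refine ⟨a, ha, haK, Set.forall_mem_range.mpr fun n => hlub.1 (haK n), fun w hw => ?_⟩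
  refine hlub.2 fun k hk => ?_
  obtain ⟨n, hkn⟩ := hcof k hk
  exact hkn.trans (hw ⟨n, rfl⟩)

lemma exists_upper_bound_of_mub_coherent (hd : IsDcpo α) {K : Set α}
    (hfin : ∀ k ∈ K, ∀ k' ∈ K, (MUBSet k k').Finite)
    (hcoh : ∀ k ∈ K, ∀ k' ∈ K, ∀ x : α, k ≤ x → k' ≤ x → ∃ m ∈ MUBSet k k', m ≤ x)
    {a c : ℕ → α} (ha : Monotone a) (hc : Monotone c) (haK : ∀ n, a n ∈ K) (hcK : ∀ n, c n ∈ K)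
    (hbdd : ∀ n, ∃ z, a n ≤ z ∧ c n ≤ z) :
    ∃ w, ∀ n, a n ≤ w ∧ c n ≤ w := by
  have hne : ∀ n, (MUBSet (a n) (c n)).Nonempty := fun n =>
    let ⟨z, haz, hcz⟩ := hbdd n
    let ⟨m, hm, _⟩ := hcoh _ (haK n) _ (hcK n) z haz hcz
    ⟨m, hm⟩
  obtain ⟨f, hfM, hf⟩ := exists_seq_rel_of_finite_levels (R := (· ≤ ·))
    (fun n => hfin _ (haK n) _ (hcK n)) hne
    (fun n m hm => hcoh _ (haK n) _ (hcK n) m ((ha n.le_succ).trans hm.1)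
      ((hc n.le_succ).trans hm.2.1))
  obtain ⟨w, hw⟩ := hd (Set.range f) (directedOn_range.mpr (monotone_nat_of_le_succ hf).directed_le)
  exact ⟨w, fun n => ⟨(hfM n).1.trans (hw.1 ⟨n, rfl⟩), (hfM n).2.1.trans (hw.1 ⟨n, rfl⟩)⟩⟩

end

/-- in a coherently continuous dcpo with countable basis, every set
`I_x = {y | {x,y} has no upper bound}` is Scott open. -/
theorem stmt16 {α : Type*} [PartialOrder α]
    (hd : IsDcpo α) (K : Set α) (hKc : K.Countable) (hK : IsDomBasis K)
    (hfin : ∀ k ∈ K, ∀ k' ∈ K, (MUBSet k k').Finite)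
    (hcoh : ∀ k ∈ K, ∀ k' ∈ K, ∀ x : α, k ≤ x → k' ≤ x →
      ∃ m ∈ MUBSet k k', m ≤ x) :
    ∀ x : α, ScottOpen (negSet x) := by
  intro x
  refine ⟨fun y hy z hyz ⟨u, hxu, hzu⟩ => hy ⟨u, hxu, hyz.trans hzu⟩,
    fun S hSne hSdir b hb hbx => ?_⟩
  by_contra! hcons
  obtain ⟨a, ha, haK, hax⟩ := hK.exists_monotone_seq_isLUB hKc x
  obtain ⟨c, hc, hcK, hcb⟩ := hK.exists_monotone_seq_isLUB hKc b
  have hbdd : ∀ n, ∃ z, a n ≤ z ∧ c n ≤ z := by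
    intro n
    obtain ⟨s, hs, hcs⟩ := (hcK n).2 S hSne hSdir b hb le_rfl
    obtain ⟨z, hxz, hsz⟩ := not_not.mp (hcons s hs)
    exact ⟨z, (hax.1 ⟨n, rfl⟩).trans hxz, hcs.trans hsz⟩
  obtain ⟨w, hw⟩ := exists_upper_bound_of_mub_coherent hd hfin hcoh ha hc
    (fun n => (haK n).1) (fun n => (hcK n).1) hbdd
  exact hbx ⟨w, hax.2 (Set.forall_mem_range.mpr fun n => (hw n).1),
    hcb.2 (Set.forall_mem_range.mpr fun n => (hw n).2)⟩
end

section
/- Let A be a dcpo with the Scott topology, and for x ∈ A define I_x = {y ∈ A | the pair {x,y} has no upper bound in A} and J_x = {y ∈ A | x ∈ Int(I_y)}, where Int denotes Scott interior. Then J is Scott continuous as a map into the powerset of A: for every nonempty directed set B ⊆ A, J_{⊔B} = ⋃_{b∈B} J_b. -/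
/-! `y ∈ J_x` says that `x` lies in the Scott open set `Int (I_y)`. Scott open sets are upper
sets, inaccessible by directed suprema, and closed under unions, which gives both inclusions. -/

section ScottOpen

variable {α : Type*} [Preorder α]

theorem ScottOpen.sUnion {𝒰 : Set (Set α)} (h𝒰 : ∀ U ∈ 𝒰, ScottOpen U) : ScottOpen (⋃₀ 𝒰) := by
  refine ⟨?_, ?_⟩
  · rintro x ⟨U, hU𝒰, hxU⟩ y hxy
    exact ⟨U, hU𝒰, (h𝒰 U hU𝒰).1 x hxU y hxy⟩
  · rintro S hS hdir b hb ⟨U, hU𝒰, hbU⟩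
    obtain ⟨s, hsS, hsU⟩ := (h𝒰 U hU𝒰).2 S hS hdir b hb hbU
    exact ⟨s, hsS, U, hU𝒰, hsU⟩

theorem scottOpen_scottInt (A : Set α) : ScottOpen (scottInt A) :=
  ScottOpen.sUnion fun _ hU => hU.1

theorem ScottOpen.mem_iff_exists_of_isLUB {U B : Set α} (hU : ScottOpen U) (hB : B.Nonempty)
    (hdir : DirectedOn (· ≤ ·) B) {s : α} (hs : IsLUB B s) : s ∈ U ↔ ∃ b ∈ B, b ∈ U :=
  ⟨hU.2 B hB hdir s hs, fun ⟨b, hbB, hbU⟩ => hU.1 b hbU s (hs.1 hbB)⟩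

end ScottOpen

theorem stmt17_general {α : Type*} [PartialOrder α] :
    ∀ B : Set α, B.Nonempty → DirectedOn (· ≤ ·) B → ∀ s : α, IsLUB B s →
      jSet s = ⋃ b ∈ B, jSet b := by
  intro B hB hdir s hs
  ext y
  simpa only [jSet, Set.mem_ofPred_eq, Set.mem_iUnion, exists_prop] using
    (scottOpen_scottInt (negSet y)).mem_iff_exists_of_isLUB hB hdir hs

/-- in a dcpo, the map `x ↦ J_x = {y | x ∈ Int (I_y)}` is Scott
continuous into the powerset: it turns least upper bounds of nonempty directed
sets into unions. -/
theorem stmt17 {α : Type*} [PartialOrder α] (hd : IsDcpo α) :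
    ∀ B : Set α, B.Nonempty → DirectedOn (· ≤ ·) B → ∀ s : α, IsLUB B s →
      jSet s = ⋃ b ∈ B, jSet b :=
  stmt17_general
end

section
/- Let A be a continuous dcpo, and for x ∈ A define I_x = {y ∈ A | the pair {x,y} has no upper bound in A} and J_x = {y ∈ A | x ∈ Int(I_y)}, where Int denotes Scott interior. If f : A → P(A) is any Scott continuous function (monotone with respect to set inclusion and satisfying f(⊔B) = ⋃_{b∈B} f(b) for every nonempty directed B ⊆ A) such that f(x) ⊆ I_x for all x ∈ A, then f(x) ⊆ J_x for all x ∈ A. In other words, J is the largest Scott continuous approximation of the negative-information map I. -/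
theorem mem_negSet_comm {α : Type*} [Preorder α] {x y : α} :
    y ∈ negSet x ↔ x ∈ negSet y := by
  simp only [negSet, Set.mem_ofPred_eq, and_comm]

theorem subset_scottInt {α : Type*} [Preorder α] {U B : Set α} (hU : ScottOpen U)
    (hUB : U ⊆ B) : U ⊆ scottInt B :=
  Set.subset_sUnion_of_mem ⟨hU, hUB⟩

theorem scottOpen_setOf_mem {α β : Type*} [Preorder α] {f : α → Set β}
    (hmono : ∀ x y : α, x ≤ y → f x ⊆ f y)
    (hcont : ∀ B : Set α, B.Nonempty → DirectedOn (· ≤ ·) B → ∀ s : α, IsLUB B s →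
      f s = ⋃ b ∈ B, f b)
    (y : β) : ScottOpen {z | y ∈ f z} := by
  refine ⟨fun a ha b hab => hmono a b hab ha, fun S hS hdir b hb hyb => ?_⟩
  have hy : y ∈ ⋃ s ∈ S, f s := hcont S hS hdir b hb ▸ hyb
  obtain ⟨s, hs, hys⟩ := Set.mem_iUnion₂.1 hy
  exact ⟨s, hs, hys⟩

theorem stmt18_general {α : Type*} [PartialOrder α]
    (f : α → Set α)
    (hmono : ∀ x y : α, x ≤ y → f x ⊆ f y)
    (hcont : ∀ B : Set α, B.Nonempty → DirectedOn (· ≤ ·) B → ∀ s : α, IsLUB B s →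
      f s = ⋃ b ∈ B, f b)
    (hsub : ∀ x : α, f x ⊆ negSet x) :
    ∀ x : α, f x ⊆ jSet x := by
  intro x y hy
  have hopen : ScottOpen {z | y ∈ f z} := scottOpen_setOf_mem hmono hcont y
  have hneg : {z | y ∈ f z} ⊆ negSet y := fun z hz => mem_negSet_comm.1 (hsub z hz)
  exact subset_scottInt hopen hneg hy

/-- in a continuous dcpo, `J` is the largest Scott continuous
approximation of the negative-information map `I`: every Scott continuous
`f : A → P(A)` with `f x ⊆ I_x` for all `x` satisfies `f x ⊆ J_x` for all `x`. -/
theorem stmt18 {α : Type*} [PartialOrder α]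
    (hd : IsDcpo α) (K : Set α) (hK : IsDomBasis K)
    (f : α → Set α)
    (hmono : ∀ x y : α, x ≤ y → f x ⊆ f y)
    (hcont : ∀ B : Set α, B.Nonempty → DirectedOn (· ≤ ·) B → ∀ s : α, IsLUB B s →
      f s = ⋃ b ∈ B, f b)
    (hsub : ∀ x : α, f x ⊆ negSet x) :
    ∀ x : α, f x ⊆ jSet x :=
  stmt18_general f hmono hcont hsub
end
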